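/- The composition law for modular chemical-potential factors holds: defining f(M;τ,z) = exp(iπ(c/(cτ+d))Q_L(z) − iπ(c/(cτ̄+d))Q_R(z)) and the induced actions τ_M = (aτ+b)/(cτ+d), z_{M,τ} = Q^{-1}((1/(cτ+d))Q_L − (1/(cτ̄+d))Q_R) z, one has f(M₁;τ,z)·f(M₂; τ_{M₁}, z_{M₁,τ}) = f(M₂M₁; τ, z) for M₁, M₂ ∈ SL(2,ℝ). -/

import Mathlib

/-!
The map `z ↦ z_{M,τ}` rescales the two quadratic forms separately: `Q_L(z_{M,τ}) = (cτ+d)⁻² Q_L(z)`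
and `Q_R(z_{M,τ}) = (cτ̄+d)⁻² Q_R(z)`, because `Q_L Q⁻¹` and `-Q_R Q⁻¹` are complementary
idempotents. Writing `j(M,τ) = cτ+d`, the composition law then reduces to the scalar identity
`c₃ / j(M₂M₁,τ) = c₁ / j(M₁,τ) + c₂ / (j(M₂,M₁τ) j(M₁,τ)²)`, applied at `τ` and at `τ̄`; it is the
logarithmic derivative of the cocycle relation `j(M₂M₁,τ) = j(M₂,M₁τ) j(M₁,τ)`, since
`d(M₁τ)/dτ = j(M₁,τ)⁻²`.
-/

open Matrix Complex

/-- Complexification of a real matrix. -/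
noncomputable def cpx {n : ℕ} (A : Matrix (Fin n) (Fin n) ℝ) : Matrix (Fin n) (Fin n) ℂ :=
  A.map (Complex.ofReal)

/-- The chemical-potential factor
`f(M;τ,z) = exp(iπ(c/(cτ+d)) Q_L(z) − iπ(c/(cτ̄+d)) Q_R(z))`,
with `Q_L = (H+Q)/2`, `Q_R = (H−Q)/2`. -/
noncomputable def chemFactor (n : ℕ) (Q H : Matrix (Fin n) (Fin n) ℝ)
    (M : Matrix (Fin 2) (Fin 2) ℝ) (τ : ℂ) (z : Fin n → ℂ) : ℂ :=
  Complex.exp ((Real.pi : ℂ) * Complex.I *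
      (((M 1 0 : ℝ) : ℂ) / (((M 1 0 : ℝ) : ℂ) * τ + ((M 1 1 : ℝ) : ℂ))) *
      (z ⬝ᵥ (cpx ((2⁻¹ : ℝ) • (H + Q)) *ᵥ z))
    - (Real.pi : ℂ) * Complex.I *
      (((M 1 0 : ℝ) : ℂ) / (((M 1 0 : ℝ) : ℂ) * (starRingEnd ℂ τ) + ((M 1 1 : ℝ) : ℂ))) *
      (z ⬝ᵥ (cpx ((2⁻¹ : ℝ) • (H - Q)) *ᵥ z)))

/-- The fractional linear action `τ_M = (aτ+b)/(cτ+d)`. -/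
noncomputable def mobiusAct (M : Matrix (Fin 2) (Fin 2) ℝ) (τ : ℂ) : ℂ :=
  (((M 0 0 : ℝ) : ℂ) * τ + ((M 0 1 : ℝ) : ℂ)) /
    (((M 1 0 : ℝ) : ℂ) * τ + ((M 1 1 : ℝ) : ℂ))

/-- The induced action on the chemical potentials
`z_{M,τ} = Q⁻¹((1/(cτ+d)) Q_L − (1/(cτ̄+d)) Q_R) z`. -/
noncomputable def zAct (n : ℕ) (Q H : Matrix (Fin n) (Fin n) ℝ)
    (M : Matrix (Fin 2) (Fin 2) ℝ) (τ : ℂ) (z : Fin n → ℂ) : Fin n → ℂ :=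
  ((cpx Q)⁻¹ *
    ((((M 1 0 : ℝ) : ℂ) * τ + ((M 1 1 : ℝ) : ℂ))⁻¹ • cpx ((2⁻¹ : ℝ) • (H + Q))
      - (((M 1 0 : ℝ) : ℂ) * (starRingEnd ℂ τ) + ((M 1 1 : ℝ) : ℂ))⁻¹ •
        cpx ((2⁻¹ : ℝ) • (H - Q)))) *ᵥ z

section QuadraticForm

variable {R ι : Type*} [CommRing R] [Fintype ι] {X A B : Matrix ι ι R}

lemma dotProduct_mulVec_of_mul_eq_smul {P K : Matrix ι ι R} {α : R} (hP : P.IsSymm)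
    (hPK : P * K = α • P) (z : ι → R) :
    (K *ᵥ z) ⬝ᵥ (P *ᵥ (K *ᵥ z)) = α ^ 2 * (z ⬝ᵥ (P *ᵥ z)) := by
  have hKP : Kᵀ * P = α • P := by
    rw [← hP.eq, ← transpose_mul, hPK, transpose_smul]
  calc (K *ᵥ z) ⬝ᵥ (P *ᵥ (K *ᵥ z))
      = α * ((P *ᵥ z) ⬝ᵥ (K *ᵥ z)) := by
        rw [mulVec_mulVec, hPK, smul_mulVec, dotProduct_smul, smul_eq_mul, dotProduct_comm]
    _ = α * ((Kᵀ * P) *ᵥ z) ⬝ᵥ z := by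
        rw [dotProduct_mulVec, ← mulVec_transpose, mulVec_mulVec]
    _ = α ^ 2 * (z ⬝ᵥ (P *ᵥ z)) := by
        rw [hKP, smul_mulVec, smul_dotProduct, smul_eq_mul, dotProduct_comm]; ring

lemma mul_mul_smul_sub_smul_left (hAA : A * X * A = A) (hAB : A * X * B = 0) (a b : R) :
    A * (X * (a • A - b • B)) = a • A := by
  rw [← Matrix.mul_assoc, Matrix.mul_sub, Matrix.mul_smul, Matrix.mul_smul, hAA, hAB, smul_zero,
    sub_zero]

lemma mul_mul_smul_sub_smul_right (hBB : B * X * B = -B) (hBA : B * X * A = 0) (a b : R) :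
    B * (X * (a • A - b • B)) = b • B := by
  rw [← Matrix.mul_assoc, Matrix.mul_sub, Matrix.mul_smul, Matrix.mul_smul, hBB, hBA, smul_zero,
    zero_sub, smul_neg, neg_neg]

end QuadraticForm

section Projectors

variable {K ι : Type*} [Field K] [Fintype ι] [DecidableEq ι] {H Q : Matrix ι ι K}

lemma smul_add_smul_mul_inv_mul_smul_add_smul (hQ : IsUnit Q.det) (hHQ : H * Q⁻¹ * H = Q)
    (a b c d : K) :
    (a • H + b • Q) * Q⁻¹ * (c • H + d • Q) = (a * d + b * c) • H + (a * c + b * d) • Q := by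
  have hHQQ : H * Q⁻¹ * Q = H := by rw [Matrix.mul_assoc, nonsing_inv_mul Q hQ, Matrix.mul_one]
  have hQQH : Q * Q⁻¹ * H = H := by rw [mul_nonsing_inv Q hQ, Matrix.one_mul]
  have hQQQ : Q * Q⁻¹ * Q = Q := by rw [mul_nonsing_inv Q hQ, Matrix.one_mul]
  simp only [Matrix.add_mul, Matrix.mul_add, Matrix.smul_mul, Matrix.mul_smul, hHQ, hHQQ, hQQH,
    hQQQ]
  module

variable (hQ : IsUnit Q.det) (hHQ : H * Q⁻¹ * H = Q)
include hQ hHQ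

lemma half_add_mul_inv_mul_half_sub :
    ((2⁻¹ : K) • (H + Q)) * Q⁻¹ * ((2⁻¹ : K) • (H - Q)) = 0 := by
  simp only [sub_eq_add_neg, smul_add, ← neg_smul, smul_neg,
    smul_add_smul_mul_inv_mul_smul_add_smul hQ hHQ]
  module

lemma half_sub_mul_inv_mul_half_add :
    ((2⁻¹ : K) • (H - Q)) * Q⁻¹ * ((2⁻¹ : K) • (H + Q)) = 0 := by
  simp only [sub_eq_add_neg, smul_add, ← neg_smul, smul_neg,
    smul_add_smul_mul_inv_mul_smul_add_smul hQ hHQ]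
  module

variable [NeZero (2 : K)]

lemma half_add_mul_inv_mul_half_add :
    ((2⁻¹ : K) • (H + Q)) * Q⁻¹ * ((2⁻¹ : K) • (H + Q)) = (2⁻¹ : K) • (H + Q) := by
  simp only [smul_add, smul_add_smul_mul_inv_mul_smul_add_smul hQ hHQ]
  match_scalars <;> field_simp <;> ring

lemma half_sub_mul_inv_mul_half_sub :
    ((2⁻¹ : K) • (H - Q)) * Q⁻¹ * ((2⁻¹ : K) • (H - Q)) = -((2⁻¹ : K) • (H - Q)) := by
  simp only [sub_eq_add_neg, smul_add, ← neg_smul, smul_neg, neg_add, neg_neg,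
    smul_add_smul_mul_inv_mul_smul_add_smul hQ hHQ]
  match_scalars <;> field_simp <;> ring

end Projectors

section Complexification

variable {n : ℕ}

lemma cpx_mul (A B : Matrix (Fin n) (Fin n) ℝ) : cpx (A * B) = cpx A * cpx B :=
  Matrix.map_mul (f := Complex.ofRealHom)

lemma cpx_neg (A : Matrix (Fin n) (Fin n) ℝ) : cpx (-A) = -cpx A := by
  ext
  simp [cpx]

lemma cpx_inv {A : Matrix (Fin n) (Fin n) ℝ} (hA : IsUnit A.det) : (cpx A)⁻¹ = cpx A⁻¹ := by
  refine inv_eq_left_inv ?_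
  rw [← cpx_mul, nonsing_inv_mul A hA]
  exact Matrix.map_one _ (by simp) (by simp)

lemma Matrix.IsSymm.cpx {A : Matrix (Fin n) (Fin n) ℝ} (hA : A.IsSymm) : (cpx A).IsSymm :=
  hA.map _

lemma cpx_mul_mul_eq {A X B C : Matrix (Fin n) (Fin n) ℝ} (h : A * X * B = C) :
    cpx A * cpx X * cpx B = cpx C := by
  rw [← cpx_mul, ← cpx_mul, h]

end Complexification

def autFactor (M : Matrix (Fin 2) (Fin 2) ℝ) (τ : ℂ) : ℂ :=
  (M 1 0 : ℂ) * τ + (M 1 1 : ℂ)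

section AutomorphyFactor

variable {M M₁ M₂ : Matrix (Fin 2) (Fin 2) ℝ} {τ : ℂ}

lemma autFactor_ne_zero (hM : M.det = 1) (hτ : τ.im ≠ 0) : autFactor M τ ≠ 0 := by
  intro h
  have hc : M 1 0 = 0 := by
    simpa [autFactor, hτ] using congrArg Complex.im h
  have hd : M 1 1 = 0 := by
    simpa [autFactor, hc] using congrArg Complex.re h
  simp [det_fin_two, hc, hd] at hM

lemma mobiusAct_conj (M : Matrix (Fin 2) (Fin 2) ℝ) (τ : ℂ) :
    mobiusAct M (starRingEnd ℂ τ) = starRingEnd ℂ (mobiusAct M τ) := by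
  simp [mobiusAct]

lemma mobiusAct_mul_autFactor (h : autFactor M τ ≠ 0) :
    mobiusAct M τ * autFactor M τ = M 0 0 * τ + M 0 1 := by
  rw [mobiusAct, ← autFactor, div_mul_cancel₀ _ h]

lemma autFactor_mul (h₁ : autFactor M₁ τ ≠ 0) :
    autFactor (M₂ * M₁) τ = autFactor M₂ (mobiusAct M₁ τ) * autFactor M₁ τ := by
  have hw := mobiusAct_mul_autFactor h₁
  simp only [autFactor, mul_apply, Fin.sum_univ_two] at hw ⊢
  push_cast
  linear_combination (-(M₂ 1 0 : ℂ)) * hw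

lemma div_autFactor_mul (hM₁ : M₁.det = 1) (h₁ : autFactor M₁ τ ≠ 0)
    (h₂₁ : autFactor (M₂ * M₁) τ ≠ 0) :
    ((M₂ * M₁) 1 0 : ℂ) / autFactor (M₂ * M₁) τ
      = (M₁ 1 0 : ℂ) / autFactor M₁ τ
        + (M₂ 1 0 : ℂ) / autFactor M₂ (mobiusAct M₁ τ) * (autFactor M₁ τ)⁻¹ ^ 2 := by
  rw [autFactor_mul h₁] at h₂₁ ⊢
  have h₂ : autFactor M₂ (mobiusAct M₁ τ) ≠ 0 := left_ne_zero_of_mul h₂₁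
  have hdet : (M₁ 0 0 : ℂ) * M₁ 1 1 - M₁ 0 1 * M₁ 1 0 = 1 := by
    rw [det_fin_two] at hM₁; exact_mod_cast hM₁
  have hw := mobiusAct_mul_autFactor h₁
  field_simp
  simp only [autFactor, mul_apply, Fin.sum_univ_two] at hw ⊢
  push_cast
  linear_combination (M₂ 1 0 : ℂ) * hdet - (M₂ 1 0 : ℂ) * (M₁ 1 0 : ℂ) * hw

end AutomorphyFactor

section ChemicalPotential

variable {n : ℕ} {Q H : Matrix (Fin n) (Fin n) ℝ}

lemma zAct_dotProduct_left (hQsymm : Q.IsSymm) (hQdet : Q.det ≠ 0) (hHsymm : H.IsSymm)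
    (hHQ : H * Q⁻¹ * H = Q) (M : Matrix (Fin 2) (Fin 2) ℝ) (τ : ℂ) (z : Fin n → ℂ) :
    zAct n Q H M τ z ⬝ᵥ (cpx ((2⁻¹ : ℝ) • (H + Q)) *ᵥ zAct n Q H M τ z)
      = (autFactor M τ)⁻¹ ^ 2 * (z ⬝ᵥ (cpx ((2⁻¹ : ℝ) • (H + Q)) *ᵥ z)) := by
  have hQ : IsUnit Q.det := hQdet.isUnit
  rw [zAct, cpx_inv hQ]
  refine dotProduct_mulVec_of_mul_eq_smul (((hHsymm.add hQsymm).smul _).cpx) ?_ z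
  exact mul_mul_smul_sub_smul_left
    (cpx_mul_mul_eq (half_add_mul_inv_mul_half_add hQ hHQ))
    (cpx_mul_mul_eq (half_add_mul_inv_mul_half_sub hQ hHQ)) _ _

lemma zAct_dotProduct_right (hQsymm : Q.IsSymm) (hQdet : Q.det ≠ 0) (hHsymm : H.IsSymm)
    (hHQ : H * Q⁻¹ * H = Q) (M : Matrix (Fin 2) (Fin 2) ℝ) (τ : ℂ) (z : Fin n → ℂ) :
    zAct n Q H M τ z ⬝ᵥ (cpx ((2⁻¹ : ℝ) • (H - Q)) *ᵥ zAct n Q H M τ z)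
      = (autFactor M (starRingEnd ℂ τ))⁻¹ ^ 2 * (z ⬝ᵥ (cpx ((2⁻¹ : ℝ) • (H - Q)) *ᵥ z)) := by
  have hQ : IsUnit Q.det := hQdet.isUnit
  rw [zAct, cpx_inv hQ]
  refine dotProduct_mulVec_of_mul_eq_smul (((hHsymm.sub hQsymm).smul _).cpx) ?_ z
  exact mul_mul_smul_sub_smul_right
    ((cpx_mul_mul_eq (half_sub_mul_inv_mul_half_sub hQ hHQ)).trans (cpx_neg _))
    (cpx_mul_mul_eq (half_sub_mul_inv_mul_half_add hQ hHQ)) _ _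

end ChemicalPotential

lemma chemFactor_def (n : ℕ) (Q H : Matrix (Fin n) (Fin n) ℝ) (M : Matrix (Fin 2) (Fin 2) ℝ)
    (τ : ℂ) (z : Fin n → ℂ) :
    chemFactor n Q H M τ z = Complex.exp
      (Real.pi * I * ((M 1 0 : ℂ) / autFactor M τ) * (z ⬝ᵥ (cpx ((2⁻¹ : ℝ) • (H + Q)) *ᵥ z))
        - Real.pi * I * ((M 1 0 : ℂ) / autFactor M (starRingEnd ℂ τ))
          * (z ⬝ᵥ (cpx ((2⁻¹ : ℝ) • (H - Q)) *ᵥ z))) :=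
  rfl

theorem stmt_17_general (n : ℕ) (Q H : Matrix (Fin n) (Fin n) ℝ)
    (hQsymm : Q.IsSymm) (hQdet : Q.det ≠ 0)
    (hHsymm : H.IsSymm) (hHQ : H * Q⁻¹ * H = Q)
    (M₁ M₂ : Matrix (Fin 2) (Fin 2) ℝ) (h₁ : M₁.det = 1) (h₂ : M₂.det = 1)
    (τ : ℂ) (hτ : 0 < τ.im) (z : Fin n → ℂ) :
    chemFactor n Q H M₁ τ z *
      chemFactor n Q H M₂ (mobiusAct M₁ τ) (zAct n Q H M₁ τ z)
      = chemFactor n Q H (M₂ * M₁) τ z := by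
  have hτ' : (starRingEnd ℂ τ).im ≠ 0 := by simpa using hτ.ne'
  have h₂₁ : (M₂ * M₁).det = 1 := by rw [det_mul, h₁, h₂, mul_one]
  simp only [chemFactor_def]
  rw [← Complex.exp_add, zAct_dotProduct_left hQsymm hQdet hHsymm hHQ,
    zAct_dotProduct_right hQsymm hQdet hHsymm hHQ, ← mobiusAct_conj,
    div_autFactor_mul h₁ (autFactor_ne_zero h₁ hτ.ne') (autFactor_ne_zero h₂₁ hτ.ne'),
    div_autFactor_mul h₁ (autFactor_ne_zero h₁ hτ') (autFactor_ne_zero h₂₁ hτ')]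
  congr 1
  ring

/-- Composition law: `f(M₁;τ,z)·f(M₂;τ_{M₁},z_{M₁,τ}) = f(M₂M₁;τ,z)` for
`M₁, M₂ ∈ SL(2,ℝ)`. -/
theorem stmt_17 (n : ℕ) (Q H : Matrix (Fin n) (Fin n) ℝ)
    (hQsymm : Q.IsSymm) (hQdet : Q.det ≠ 0)
    (hHsymm : H.IsSymm) (hHpos : H.PosDef) (hHQ : H * Q⁻¹ * H = Q)
    (M₁ M₂ : Matrix (Fin 2) (Fin 2) ℝ) (h₁ : M₁.det = 1) (h₂ : M₂.det = 1)
    (τ : ℂ) (hτ : 0 < τ.im) (z : Fin n → ℂ) :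
    chemFactor n Q H M₁ τ z *
      chemFactor n Q H M₂ (mobiusAct M₁ τ) (zAct n Q H M₁ τ z)
      = chemFactor n Q H (M₂ * M₁) τ z :=
  stmt_17_general n Q H hQsymm hQdet hHsymm hHQ M₁ M₂ h₁ h₂ τ hτ z
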